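/- Let P and Q be posets with |P| = |Q| = d ≥ 2. Suppose the 2-element antichains of P and Q are pairwise disjoint within each poset and compatible in the sense of the smoothness criterion (no index-set intersection of size 1 between a 2-antichain of P and one of Q), and neither poset has antichains of size ≥ 3. Then Γ(C(P), −C(Q)) splits as a free sum of copies of the interval [−1,1], del Pezzo 2-polytopes V_2 = conv(±e_1, ±e_2, ±(e_1+e_2)), and pseudo del Pezzo 2-polytopes Ṽ_2 = conv(±e_1, ±e_2, e_1+e_2), up to unimodular equivalence. -/

import Mathlib

open Set MeasureTheory Pointwise

def IsIdeal {d : ℕ} (P : PartialOrder (Fin d)) (I : Finset (Fin d)) : Prop :=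
  ∀ i ∈ I, ∀ j, P.le j i → j ∈ I

def IsAC {d : ℕ} (P : PartialOrder (Fin d)) (A : Finset (Fin d)) : Prop :=
  ∀ i ∈ A, ∀ j ∈ A, i ≠ j → ¬ P.le i j ∧ ¬ P.le j i

def rho {d : ℕ} (S : Finset (Fin d)) : Fin d → ℝ := fun i => if i ∈ S then 1 else 0

def IsLatticePt {d : ℕ} (x : Fin d → ℝ) : Prop := ∀ i, ∃ z : ℤ, x i = (z : ℝ)

def orderPolytope {d : ℕ} (P : PartialOrder (Fin d)) : Set (Fin d → ℝ) :=
  {x | (∀ i, 0 ≤ x i ∧ x i ≤ 1) ∧ ∀ i j : Fin d, P.le i j → x j ≤ x i}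

def chainPolytope {d : ℕ} (P : PartialOrder (Fin d)) : Set (Fin d → ℝ) :=
  {x | (∀ i, 0 ≤ x i) ∧
    ∀ c : Finset (Fin d), (∀ i ∈ c, ∀ j ∈ c, P.le i j ∨ P.le j i) →
      ∑ i ∈ c, x i ≤ 1}

def idealVerts {d : ℕ} (P : PartialOrder (Fin d)) : Set (Fin d → ℝ) :=
  {x | ∃ I : Finset (Fin d), IsIdeal P I ∧ x = rho I}

def acVerts {d : ℕ} (P : PartialOrder (Fin d)) : Set (Fin d → ℝ) :=
  {x | ∃ A : Finset (Fin d), IsAC P A ∧ x = rho A}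

def GammaOO {d : ℕ} (P Q : PartialOrder (Fin d)) : Set (Fin d → ℝ) :=
  convexHull ℝ (idealVerts P ∪ (fun v => -v) '' idealVerts Q)

def GammaOC {d : ℕ} (P Q : PartialOrder (Fin d)) : Set (Fin d → ℝ) :=
  convexHull ℝ (idealVerts P ∪ (fun v => -v) '' acVerts Q)

def GammaCC {d : ℕ} (P Q : PartialOrder (Fin d)) : Set (Fin d → ℝ) :=
  convexHull ℝ (acVerts P ∪ (fun v => -v) '' acVerts Q)

def IsLinExt {d : ℕ} (P : PartialOrder (Fin d)) (σ : Equiv.Perm (Fin d)) : Prop :=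
  ∀ a b : Fin d, P.lt (σ a) (σ b) → a < b

noncomputable def latCount {d : ℕ} (S : Set (Fin d → ℝ)) : ℕ :=
  Set.ncard {x ∈ S | IsLatticePt x}

def dil {d : ℕ} (n : ℕ) (S : Set (Fin d → ℝ)) : Set (Fin d → ℝ) := (n : ℝ) • S

def UnimodEquiv {d : ℕ} (S T : Set (Fin d → ℝ)) : Prop :=
  ∃ U : Matrix (Fin d) (Fin d) ℤ, IsUnit U.det ∧
    T = (fun v => (U.map (fun z : ℤ => (z : ℝ))).mulVec v) '' S

def IsLatticePolytope {d : ℕ} (S : Set (Fin d → ℝ)) : Prop :=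
  ∃ V : Finset (Fin d → ℝ), (∀ v ∈ V, IsLatticePt v) ∧ S = convexHull ℝ ↑V

def IsFanoPolytope {d : ℕ} (S : Set (Fin d → ℝ)) : Prop :=
  IsLatticePolytope S ∧ affineSpan ℝ S = ⊤ ∧ (0 : Fin d → ℝ) ∈ interior S ∧
    ∀ x ∈ interior S, IsLatticePt x → x = 0

def IsFacet {d : ℕ} (S F : Set (Fin d → ℝ)) : Prop :=
  IsExposed ℝ S F ∧ F.Nonempty ∧ F ≠ S ∧
    ∀ G : Set (Fin d → ℝ), IsExposed ℝ S G → G ≠ S → F ⊆ G → G = F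

def IsZBasisSet {d : ℕ} (B : Set (Fin d → ℝ)) : Prop :=
  B.ncard = d ∧ (∀ x ∈ B, IsLatticePt x) ∧
    ∀ y : Fin d → ℝ, y ∈ Submodule.span ℤ B ↔ IsLatticePt y

def IsSmoothFano {d : ℕ} (S : Set (Fin d → ℝ)) : Prop :=
  IsFanoPolytope S ∧ ∀ F, IsFacet S F → IsZBasisSet (Set.extremePoints ℝ F)

def IsSimplicialPolytope {d : ℕ} (S : Set (Fin d → ℝ)) : Prop :=
  ∀ F : Set (Fin d → ℝ), IsExposed ℝ S F → F ≠ S →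
    ∃ V : Set (Fin d → ℝ), V.Finite ∧
      AffineIndependent ℝ ((↑) : V → (Fin d → ℝ)) ∧ F = convexHull ℝ V

def seg {d : ℕ} (σ : Equiv.Perm (Fin d)) (k : Fin d) : Finset (Fin d) :=
  (Finset.Iic k).image σ

def unitVec (d : ℕ) (a : ℕ) : Fin d → ℝ := fun i => if (i : ℕ) = a then 1 else 0

def pairVec (d : ℕ) (a : ℕ) : Fin d → ℝ :=
  fun i => if (i : ℕ) = a ∨ (i : ℕ) = a + 1 then 1 else 0

def modelSplit (d k l m : ℕ) : Set (Fin d → ℝ) :=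
  convexHull ℝ (
    {x | ∃ i : Fin d, x = unitVec d (i : ℕ) ∨ x = -unitVec d (i : ℕ)} ∪
    {x | ∃ i < k, x = pairVec d (2 * i) ∨ x = -pairVec d (2 * i)} ∪
    {x | ∃ i < l, x = pairVec d (2 * k + 2 * i)} ∪
    {x | ∃ i < m, x = -pairVec d (2 * k + 2 * l + 2 * i)})

def chainOrd (d : ℕ) : PartialOrder (Fin d) := inferInstance

def vOrd (d : ℕ) : PartialOrder (Fin d) where
  le i j := i = j ∨ ((i : ℕ) < (j : ℕ) ∧ 2 ≤ (j : ℕ))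
  lt i j := (i = j ∨ ((i : ℕ) < (j : ℕ) ∧ 2 ≤ (j : ℕ))) ∧
    ¬ (j = i ∨ ((j : ℕ) < (i : ℕ) ∧ 2 ≤ (i : ℕ)))
  lt_iff_le_not_ge i j := Iff.rfl
  le_refl i := Or.inl rfl
  le_trans i j k hij hjk := by
    rcases hij with rfl | ⟨h1, h2⟩
    · exact hjk
    · rcases hjk with rfl | ⟨h3, h4⟩
      · exact Or.inr ⟨h1, h2⟩
      · exact Or.inr ⟨lt_trans h1 h3, h4⟩
  le_antisymm i j hij hji := by
    rcases hij with rfl | ⟨h1, h2⟩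
    · rfl
    · rcases hji with h | ⟨h3, h4⟩
      · exact h.symm
      · exact absurd h3 (by omega)

/-!
Under the hypotheses the 2-element antichains of `P` and `Q` together form a family of pairwise
disjoint pairs, and every other antichain has at most one element, so the vertices of
`Γ(C(P), -C(Q))` are `0`, `±eᵢ`, `ρ(A)` for the pairs `A` of `P` and `-ρ(B)` for the pairs `B`
of `Q`. List the pairs as: first those that are antichains of both posets, then those of `P`
only, then those of `Q` only, and permute coordinates so that the `j`-th pair becomes
`{2j, 2j+1}`. A coordinate permutation is unimodular, and it carries the vertex set onto that of
the model polytope together with `0`, which is redundant as the midpoint of `±e₀`.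
-/

theorem List.getD_mem {α : Type*} {l : List α} {i : ℕ} (x : α) (hi : i < l.length) :
    l.getD i x ∈ l :=
  List.getD_eq_getElem l x hi ▸ List.getElem_mem hi

theorem Finset.exists_bijOn_Iio_of_disjoint₃ {α : Type*} [Inhabited α] (C L M : Finset α)
    (hCL : Disjoint C L) (hCM : Disjoint C M) (hLM : Disjoint L M) :
    ∃ pr : ℕ → α, Set.BijOn pr (Set.Iio (C.card + L.card + M.card)) (↑C ∪ ↑L ∪ ↑M) ∧
      ∀ j < C.card + L.card + M.card,
        (pr j ∈ C ↔ j < C.card) ∧ (pr j ∈ L ↔ C.card ≤ j ∧ j < C.card + L.card) ∧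
          (pr j ∈ M ↔ C.card + L.card ≤ j) := by
  rw [Finset.disjoint_left] at hCL hCM hLM
  set ls := C.toList ++ L.toList ++ M.toList
  have hlen : ls.length = C.card + L.card + M.card := by simp [ls, add_assoc]
  have hnodup : ls.Nodup := by
    simp only [ls, List.nodup_append, Finset.nodup_toList, List.mem_append, Finset.mem_toList]
    grind
  have hmem_ls {a : α} : a ∈ ls ↔ a ∈ (↑C ∪ ↑L ∪ ↑M : Set α) := by simp [ls, or_assoc]
  refine ⟨(ls.getD · default), ⟨fun j hj => ?_, fun i hi j hj hij => ?_, fun a ha => ?_⟩,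
    fun j hj => ?_⟩
  · exact hmem_ls.mp (List.getD_mem _ (hlen ▸ hj))
  · rw [Set.mem_Iio, ← hlen] at hi hj
    simp only [List.getD_eq_getElem _ _ hi, List.getD_eq_getElem _ _ hj] at hij
    exact hnodup.getElem_inj_iff.mp hij
  · obtain ⟨j, hj, rfl⟩ := List.mem_iff_getElem.mp (hmem_ls.mpr ha)
    exact ⟨j, hlen ▸ hj, List.getD_eq_getElem _ _ hj⟩
  · have hblock : (j < C.card → ls.getD j default ∈ C.toList) ∧
        (C.card ≤ j → j < C.card + L.card → ls.getD j default ∈ L.toList) ∧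
        (C.card + L.card ≤ j → ls.getD j default ∈ M.toList) := by
      simp only [ls, List.getD_eq_getElem?_getD, List.getElem?_append]
      grind
    simp only [Finset.mem_toList] at hblock
    grind

theorem Finset.disjoint_of_card_eq_two {α : Type*} [DecidableEq α] {A B : Finset α}
    (hA : A.card = 2) (hB : B.card = 2) (hAB : A ≠ B) (h : (A ∩ B).card ≠ 1) : Disjoint A B := by
  rw [Finset.disjoint_iff_inter_eq_empty, ← Finset.card_eq_zero]
  by_contra h0
  have h2 : (A ∩ B).card = 2 := by
    have := Finset.card_le_card (Finset.inter_subset_left : A ∩ B ⊆ A)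
    omega
  exact hAB ((Finset.eq_of_subset_of_card_le Finset.inter_subset_left (by omega)).symm.trans
    (Finset.eq_of_subset_of_card_le Finset.inter_subset_right (by omega)))

-- The pairs, each enumerated by `orderEmbOfFin`, give an injection `Fin n × Fin 2 → Fin d`;
-- `σ` extends it along `(j, t) ↦ 2j + t`.
theorem exists_perm_mem_iff_of_pairwise_disjoint {d n : ℕ} (pr : ℕ → Finset (Fin d))
    (hcard : ∀ j < n, (pr j).card = 2)
    (hdisj : ∀ i < n, ∀ j < n, i ≠ j → Disjoint (pr i) (pr j)) :
    2 * n ≤ d ∧ ∃ σ : Equiv.Perm (Fin d), ∀ j < n, ∀ x : Fin d,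
      σ x ∈ pr j ↔ ((x : ℕ) = 2 * j ∨ (x : ℕ) = 2 * j + 1) := by
  let f : Fin n × Fin 2 → Fin d := fun p => (pr p.1).orderEmbOfFin (hcard p.1 p.1.2) p.2
  have hf_mem (p : Fin n × Fin 2) : f p ∈ pr p.1 := Finset.orderEmbOfFin_mem _ _ _
  have hf : Function.Injective f := by
    rintro ⟨i, s⟩ ⟨j, t⟩ hst
    obtain rfl : i = j := by
      by_contra hij
      exact Finset.disjoint_left.mp (hdisj i i.2 j j.2 (Fin.val_ne_of_ne hij))
        (hf_mem (i, s)) (hst ▸ hf_mem (j, t))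
    exact congrArg (i, ·) (((pr i).orderEmbOfFin _).injective hst)
  let g : Fin (n * 2) → Fin d := f ∘ finProdFinEquiv.symm
  have hg : Function.Injective g := hf.comp finProdFinEquiv.symm.injective
  have hnd : n * 2 ≤ d := by simpa using Fintype.card_le_of_injective g hg
  obtain ⟨σ, hσ⟩ := Equiv.Perm.exists_extending_pair (Fin.castLE hnd) g
    (Fin.castLE_injective hnd) hg
  have hσf (p : Fin n × Fin 2) : σ (Fin.castLE hnd (finProdFinEquiv p)) = f p := by
    simp [hσ, g]
  refine ⟨by omega, σ, fun j hj x => ⟨fun hx => ?_, fun hx => ?_⟩⟩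
  · have hx' : σ x ∈ Set.range ((pr j).orderEmbOfFin (hcard j hj)) := by
      rwa [Finset.range_orderEmbOfFin]
    obtain ⟨t, ht⟩ := hx'
    have hxt := congrArg Fin.val (σ.injective ((hσf (⟨j, hj⟩, t)).trans ht))
    simp only [Fin.val_castLE, finProdFinEquiv_apply_val] at hxt
    omega
  · have hxt : x = Fin.castLE hnd (finProdFinEquiv (⟨j, hj⟩, ⟨x - 2 * j, by omega⟩)) := by
      ext
      simp only [Fin.val_castLE, finProdFinEquiv_apply_val]
      omega
    rw [hxt, hσf]
    exact hf_mem _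

theorem convexHull_insert_of_mem_convexHull {E : Type*} [AddCommGroup E] [Module ℝ E]
    {s : Set E} {x : E} (hx : x ∈ convexHull ℝ s) : convexHull ℝ (insert x s) = convexHull ℝ s :=
  (convexHull_min (Set.insert_subset hx (subset_convexHull ℝ s)) (convex_convexHull ℝ s)).antisymm
    (convexHull_mono (Set.subset_insert x s))

theorem isAC_of_card_le_one {d : ℕ} (P : PartialOrder (Fin d)) {A : Finset (Fin d)}
    (hA : A.card ≤ 1) : IsAC P A :=
  fun i hi j hj hij => absurd (Finset.card_le_one.mp hA i hi j hj) hij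

open Classical in
noncomputable def acPairs {d : ℕ} (P : PartialOrder (Fin d)) : Finset (Finset (Fin d)) :=
  {A | IsAC P A ∧ A.card = 2}

theorem mem_acPairs {d : ℕ} {P : PartialOrder (Fin d)} {A : Finset (Fin d)} :
    A ∈ acPairs P ↔ IsAC P A ∧ A.card = 2 := by
  simp [acPairs]

theorem pairwise_disjoint_acPairs {d : ℕ} {P Q : PartialOrder (Fin d)}
    (hP : ∀ A B : Finset (Fin d), IsAC P A → IsAC P B → A.card = 2 → B.card = 2 →
      A ≠ B → A ∩ B = ∅)
    (hQ : ∀ A B : Finset (Fin d), IsAC Q A → IsAC Q B → A.card = 2 → B.card = 2 →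
      A ≠ B → A ∩ B = ∅)
    (hPQ : ∀ A B : Finset (Fin d), IsAC P A → IsAC Q B → A.card = 2 → B.card = 2 →
      (A ∩ B).card ≠ 1) :
    (↑(acPairs P ∪ acPairs Q) : Set (Finset (Fin d))).Pairwise Disjoint := by
  intro A hA B hB hAB
  simp only [Finset.coe_union, Set.mem_union, Finset.mem_coe, mem_acPairs] at hA hB
  rcases hA with ⟨hA, hA2⟩ | ⟨hA, hA2⟩ <;> rcases hB with ⟨hB, hB2⟩ | ⟨hB, hB2⟩
  · exact Finset.disjoint_iff_inter_eq_empty.mpr (hP A B hA hB hA2 hB2 hAB)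
  · exact Finset.disjoint_of_card_eq_two hA2 hB2 hAB (hPQ A B hA hB hA2 hB2)
  · refine Finset.disjoint_of_card_eq_two hA2 hB2 hAB ?_
    rw [Finset.inter_comm]
    exact hPQ B A hB hA hB2 hA2
  · exact Finset.disjoint_iff_inter_eq_empty.mpr (hQ A B hA hB hA2 hB2 hAB)

theorem exists_enumeration_acPairs {d : ℕ} (P Q : PartialOrder (Fin d)) :
    ∃ (k l m : ℕ) (pr : ℕ → Finset (Fin d)),
      Set.BijOn pr (Set.Iio (k + l + m)) ↑(acPairs P ∪ acPairs Q) ∧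
      {j | j < k + l + m ∧ IsAC P (pr j)} = Set.Iio (k + l) ∧
      {j | j < k + l + m ∧ IsAC Q (pr j)} = {j | j < k ∨ k + l ≤ j ∧ j < k + l + m} := by
  classical
  set SP := acPairs P
  set SQ := acPairs Q
  obtain ⟨pr, hbij, hblock⟩ := Finset.exists_bijOn_Iio_of_disjoint₃ (SP ∩ SQ) (SP \ SQ) (SQ \ SP)
    (Finset.disjoint_sdiff_inter _ _).symm
    (Finset.disjoint_sdiff.mono_left Finset.inter_subset_left) disjoint_sdiff_sdiff
  have hunion : (↑(SP ∩ SQ) ∪ ↑(SP \ SQ) ∪ ↑(SQ \ SP) : Set (Finset (Fin d))) = ↑(SP ∪ SQ) := by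
    ext A
    simp only [Set.mem_union, Finset.mem_coe, Finset.mem_union, Finset.mem_inter,
      Finset.mem_sdiff]
    tauto
  set n := (SP ∩ SQ).card + (SP \ SQ).card + (SQ \ SP).card
  have hmem (j) (hj : j < n) : (IsAC P (pr j) ↔ j < (SP ∩ SQ).card + (SP \ SQ).card) ∧
      (IsAC Q (pr j) ↔ j < (SP ∩ SQ).card ∨ (SP ∩ SQ).card + (SP \ SQ).card ≤ j) := by
    have hcard : (pr j).card = 2 := by
      have := hunion ▸ hbij.mapsTo hj
      simp only [Finset.coe_union, Set.mem_union, Finset.mem_coe, SP, SQ, mem_acPairs] at this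
      tauto
    have := hblock j hj
    simp only [Finset.mem_inter, Finset.mem_sdiff, SP, SQ, mem_acPairs, hcard, and_true] at this
    grind
  refine ⟨_, _, _, pr, hunion ▸ hbij, ?_, ?_⟩ <;> ext j <;>
    simp only [Set.mem_ofPred_eq, Set.mem_Iio] <;> grind

theorem rho_empty {d : ℕ} : rho (∅ : Finset (Fin d)) = 0 := by
  ext; simp [rho]

theorem rho_singleton_comp {d : ℕ} (σ : Equiv.Perm (Fin d)) (a : Fin d) :
    rho {a} ∘ σ = unitVec d (σ.symm a) := by
  ext i
  simp [rho, unitVec, Fin.val_inj, Equiv.eq_symm_apply]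

theorem rho_comp_eq_pairVec {d : ℕ} (σ : Equiv.Perm (Fin d)) (A : Finset (Fin d)) (a : ℕ)
    (h : ∀ x : Fin d, σ x ∈ A ↔ ((x : ℕ) = a ∨ (x : ℕ) = a + 1)) : rho A ∘ σ = pairVec d a := by
  ext i
  simp [rho, pairVec, h]

def halfVerts (d : ℕ) (I : Set ℕ) : Set (Fin d → ℝ) :=
  Set.range (fun i : Fin d => unitVec d i) ∪ (fun j => pairVec d (2 * j)) '' I

theorem image_comp_acVerts {d n : ℕ} (P : PartialOrder (Fin d)) (σ : Equiv.Perm (Fin d))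
    (pr : ℕ → Finset (Fin d)) (hσ : ∀ j < n, rho (pr j) ∘ σ = pairVec d (2 * j))
    (hP : ∀ A, IsAC P A → A.card ≤ 2)
    (hcover : ∀ A, IsAC P A → A.card = 2 → ∃ j < n, pr j = A) :
    (· ∘ σ) '' acVerts P = insert 0 (halfVerts d {j | j < n ∧ IsAC P (pr j)}) := by
  ext x
  constructor
  · rintro ⟨_, ⟨A, hA, rfl⟩, rfl⟩
    obtain h0 | h1 | h2 : A.card = 0 ∨ A.card = 1 ∨ A.card = 2 := by have := hP A hA; omega
    · rw [Finset.card_eq_zero.mp h0, rho_empty]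
      exact Or.inl rfl
    · obtain ⟨a, rfl⟩ := Finset.card_eq_one.mp h1
      exact Or.inr (Or.inl ⟨σ.symm a, (rho_singleton_comp σ a).symm⟩)
    · obtain ⟨j, hj, rfl⟩ := hcover A hA h2
      exact Or.inr (Or.inr ⟨j, ⟨hj, hA⟩, (hσ j hj).symm⟩)
  · rintro (rfl | ⟨i, rfl⟩ | ⟨j, ⟨hj, hA⟩, rfl⟩)
    · exact ⟨rho ∅, ⟨∅, isAC_of_card_le_one P (by simp), rfl⟩, by simp [rho_empty]⟩
    · refine ⟨rho {σ i}, ⟨{σ i}, isAC_of_card_le_one P (by simp), rfl⟩, ?_⟩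
      simp [rho_singleton_comp]
    · exact ⟨rho (pr j), ⟨pr j, hA, rfl⟩, hσ j hj⟩

theorem image_comp_GammaCC {d : ℕ} (hd : 0 < d) (P Q : PartialOrder (Fin d))
    (σ : Equiv.Perm (Fin d)) {I J : Set ℕ}
    (hP : (· ∘ σ) '' acVerts P = insert 0 (halfVerts d I))
    (hQ : (· ∘ σ) '' acVerts Q = insert 0 (halfVerts d J)) :
    (· ∘ σ) '' GammaCC P Q = convexHull ℝ (halfVerts d I ∪ -halfVerts d J) := by
  have hneg : (· ∘ σ) '' ((fun v => -v) '' acVerts Q) = -((· ∘ σ) '' acVerts Q) := by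
    rw [← Set.image_neg_eq_neg, Set.image_image, Set.image_image]
    rfl
  have h0 : (0 : Fin d → ℝ) ∈ convexHull ℝ (halfVerts d I ∪ -halfVerts d J) := by
    have he : unitVec d 0 ∈ halfVerts d I ∪ -halfVerts d J := Or.inl (Or.inl ⟨⟨0, hd⟩, rfl⟩)
    have hne : -unitVec d 0 ∈ halfVerts d I ∪ -halfVerts d J :=
      Or.inr (by rw [Set.mem_neg, neg_neg]; exact Or.inl ⟨⟨0, hd⟩, rfl⟩)
    have := convex_convexHull ℝ _ (subset_convexHull ℝ _ he) (subset_convexHull ℝ _ hne)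
      (by norm_num : (0 : ℝ) ≤ 1 / 2) (by norm_num : (0 : ℝ) ≤ 1 / 2) (by norm_num)
    rwa [smul_neg, add_neg_cancel] at this
  refine ((LinearMap.funLeft ℝ ℝ σ).image_convexHull _).trans ?_
  change convexHull ℝ ((· ∘ σ) '' _) = _
  rw [Set.image_union, hneg, hP, hQ, Set.neg_insert, neg_zero, Set.insert_union, Set.union_insert,
    Set.insert_idem, convexHull_insert_of_mem_convexHull h0]

theorem modelSplit_eq_convexHull_halfVerts (d k l m : ℕ) :
    modelSplit d k l m = convexHull ℝ
      (halfVerts d (Set.Iio (k + l)) ∪ -halfVerts d {j | j < k ∨ k + l ≤ j ∧ j < k + l + m}) := by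
  rw [modelSplit]
  congr 1
  ext x
  simp only [halfVerts, Set.mem_union, Set.mem_neg, Set.mem_range, Set.mem_image, Set.mem_Iio,
    Set.mem_ofPred_eq]
  constructor
  · rintro (((⟨i, rfl | rfl⟩ | ⟨i, hi, rfl | rfl⟩) | ⟨i, hi, rfl⟩) | ⟨i, hi, rfl⟩)
    · exact Or.inl (Or.inl ⟨i, rfl⟩)
    · exact Or.inr (Or.inl ⟨i, (neg_neg _).symm⟩)
    · exact Or.inl (Or.inr ⟨i, by omega, rfl⟩)
    · exact Or.inr (Or.inr ⟨i, Or.inl hi, (neg_neg _).symm⟩)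
    · exact Or.inl (Or.inr ⟨k + i, by omega, by rw [mul_add]⟩)
    · refine Or.inr (Or.inr ⟨k + l + i, Or.inr ⟨by omega, by omega⟩, ?_⟩)
      rw [neg_neg, mul_add, mul_add]
  · rintro ((⟨i, rfl⟩ | ⟨j, hj, rfl⟩) | (⟨i, hx⟩ | ⟨j, hj, hx⟩))
    · exact Or.inl (Or.inl (Or.inl ⟨i, Or.inl rfl⟩))
    · rcases lt_or_ge j k with hjk | hjk
      · exact Or.inl (Or.inl (Or.inr ⟨j, hjk, Or.inl rfl⟩))
      · exact Or.inl (Or.inr ⟨j - k, by omega, by rw [← mul_add, Nat.add_sub_cancel' hjk]⟩)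
    · exact Or.inl (Or.inl (Or.inl ⟨i, Or.inr (neg_eq_iff_eq_neg.mp hx.symm)⟩))
    · obtain rfl := neg_eq_iff_eq_neg.mp hx.symm
      rcases hj with hjk | hjk
      · exact Or.inl (Or.inl (Or.inr ⟨j, hjk, Or.inr rfl⟩))
      · refine Or.inr ⟨j - k - l, by omega, ?_⟩
        rw [← mul_add, ← mul_add]
        congr 3
        omega

theorem unimodEquiv_of_image_comp_perm {d : ℕ} {S T : Set (Fin d → ℝ)} (σ : Equiv.Perm (Fin d))
    (h : (· ∘ σ) '' S = T) : UnimodEquiv S T := by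
  refine ⟨σ.permMatrix ℤ, by simp [Matrix.det_permutation], ?_⟩
  have : (σ.permMatrix ℤ).map (fun z : ℤ => (z : ℝ)) = σ.permMatrix ℝ := by
    ext i j
    simp [PEquiv.toMatrix_apply]
  simp_rw [this, Matrix.permMatrix_mulVec, h]

theorem statement14 {d : ℕ} (hd : 2 ≤ d) (P Q : PartialOrder (Fin d))
    (h1 : ∀ A B : Finset (Fin d), IsAC P A → IsAC P B → A.card = 2 → B.card = 2 →
      A ≠ B → A ∩ B = ∅)
    (h2 : ∀ A B : Finset (Fin d), IsAC Q A → IsAC Q B → A.card = 2 → B.card = 2 →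
      A ≠ B → A ∩ B = ∅)
    (h3 : ∀ A B : Finset (Fin d), IsAC P A → IsAC Q B → A.card = 2 → B.card = 2 →
      (A ∩ B).card ≠ 1)
    (h4 : ∀ A : Finset (Fin d), IsAC P A → A.card ≤ 2)
    (h5 : ∀ B : Finset (Fin d), IsAC Q B → B.card ≤ 2) :
    ∃ k l m : ℕ, 2 * k + 2 * l + 2 * m ≤ d ∧
      UnimodEquiv (GammaCC P Q) (modelSplit d k l m) := by
  obtain ⟨k, l, m, pr, hbij, hIP, hIQ⟩ := exists_enumeration_acPairs P Q
  have hcard (j) (hj : j < k + l + m) : (pr j).card = 2 := by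
    rcases Finset.mem_union.mp (hbij.mapsTo hj) with h | h <;> exact (mem_acPairs.mp h).2
  obtain ⟨h2n, σ, hσ⟩ := exists_perm_mem_iff_of_pairwise_disjoint pr hcard
    fun i hi j hj hij => pairwise_disjoint_acPairs h1 h2 h3 (hbij.mapsTo hi) (hbij.mapsTo hj)
      (hbij.injOn.ne hi hj hij)
  have hσρ (j) (hj : j < k + l + m) : rho (pr j) ∘ σ = pairVec d (2 * j) :=
    rho_comp_eq_pairVec σ _ _ (hσ j hj)
  refine ⟨k, l, m, by omega, unimodEquiv_of_image_comp_perm σ ?_⟩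
  rw [modelSplit_eq_convexHull_halfVerts, ← hIP, ← hIQ]
  exact image_comp_GammaCC (by omega) P Q σ
    (image_comp_acVerts P σ pr hσρ h4 fun A hA hA2 =>
      hbij.surjOn (Finset.mem_union_left _ (mem_acPairs.mpr ⟨hA, hA2⟩)))
    (image_comp_acVerts Q σ pr hσρ h5 fun A hA hA2 =>
      hbij.surjOn (Finset.mem_union_right _ (mem_acPairs.mpr ⟨hA, hA2⟩)))
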